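/- Let g(x) = (x₁ − a)² + (x₂ − b)² − R² with (a,b) ∈ ℝ² and R > 0, and let q ∈ ℝ[x₁,x₂] vanish on a nonempty open arc of the circle {x ∈ ℝ² : g(x) = 0}. Then g divides q in ℝ[x₁,x₂]. -/

import Mathlib

/-!
View `g` as a monic quadratic in `x₁` over `ℝ[x₂]` and divide `q` by it: the remainder
`r₁(x₂) x₁ + r₀(x₂)` vanishes on the arc. Eliminating `x₁` with the circle equation gives
`(r₀ + a r₁)² + r₁² ((x₂ - b)² - R²) = 0` at the infinitely many ordinates of the arc, hence
identically; for `|x₂ - b| > R` both terms are nonnegative, so `r₁ = 0`, and then `r₀ = 0`.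
-/

open MvPolynomial

/-- `g(x) = (x₁ - a)² + (x₂ - b)² - R²`. -/
noncomputable def gHole (a b R : ℝ) : MvPolynomial (Fin 2) ℝ :=
  (X 0 - C a) ^ 2 + (X 1 - C b) ^ 2 - C R ^ 2

namespace MvPolynomial

theorem eval₂_finSuccEquiv_modByMonic_of_eval_eq_zero {R : Type*} [CommRing R] {n : ℕ}
    (s : Fin n → R) (y : R) (p g : MvPolynomial (Fin (n + 1)) R)
    (hg : eval (Fin.cons y s) g = 0) :
    (finSuccEquiv R n p %ₘ finSuccEquiv R n g).eval₂ (eval s) y = eval (Fin.cons y s) p := by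
  rw [eval_eq_eval_mv_eval', Polynomial.eval_map] at hg ⊢
  exact Polynomial.eval₂_modByMonic_eq_self_of_root hg

theorem eq_zero_of_infinite_eval_eq_zero {K : Type*} [CommRing K] [IsDomain K]
    {p : MvPolynomial (Fin 1) K} {S : Set K} (hS : S.Infinite)
    (h : ∀ t ∈ S, eval ![t] p = 0) : p = 0 := by
  refine funext_set (fun _ ↦ S) (fun _ ↦ hS) fun x hx ↦ ?_
  have hx' : x = ![x 0] := by ext i; fin_cases i; rfl
  rw [map_zero, hx']
  exact h _ (hx 0 trivial)

end MvPolynomial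

section Circle

variable (a b R : ℝ)

@[simp]
theorem eval_gHole (x : Fin 2 → ℝ) :
    eval x (gHole a b R) = (x 0 - a) ^ 2 + (x 1 - b) ^ 2 - R ^ 2 := by
  simp [gHole]

theorem finSuccEquiv_gHole : finSuccEquiv ℝ 1 (gHole a b R) =
    Polynomial.X ^ 2 + Polynomial.C (C (-(2 * a))) * Polynomial.X
      + Polynomial.C (C a ^ 2 + (X 0 - C b) ^ 2 - C R ^ 2) := by
  have hC : ∀ r : ℝ, finSuccEquiv ℝ 1 (C r) = Polynomial.C (C r) := fun r ↦ by
    simp [finSuccEquiv_apply]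
  simp only [gHole, show (1 : Fin 2) = Fin.succ 0 from rfl, map_sub, map_add, map_pow,
    finSuccEquiv_X_zero, finSuccEquiv_X_succ, hC]
  simp only [map_neg, map_mul, map_ofNat]
  ring

theorem monic_finSuccEquiv_gHole : (finSuccEquiv ℝ 1 (gHole a b R)).Monic := by
  rw [finSuccEquiv_gHole, add_assoc]
  exact Polynomial.monic_X_pow_add Polynomial.degree_linear_lt

theorem natDegree_finSuccEquiv_gHole : (finSuccEquiv ℝ 1 (gHole a b R)).natDegree = 2 := by
  rw [finSuccEquiv_gHole, add_assoc]
  refine (Polynomial.natDegree_add_eq_left_of_degree_lt ?_).trans (Polynomial.natDegree_X_pow 2)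
  rw [Polynomial.degree_X_pow]
  exact Polynomial.degree_linear_lt

theorem eq_zero_of_infinite_circle_zeros (r₁ r₀ : MvPolynomial (Fin 1) ℝ)
    (hS : {v | ∃ u, (u - a) ^ 2 + (v - b) ^ 2 = R ^ 2 ∧
      eval ![v] r₁ * u + eval ![v] r₀ = 0}.Infinite) :
    r₁ = 0 ∧ r₀ = 0 := by
  have hD : (r₀ + C a * r₁) ^ 2 + r₁ ^ 2 * ((X 0 - C b) ^ 2 - C R ^ 2) = 0 := by
    refine eq_zero_of_infinite_eval_eq_zero hS ?_
    rintro v ⟨u, hcirc, hlin⟩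
    simp only [map_add, map_mul, map_pow, map_sub, eval_C, eval_X, Matrix.cons_val_fin_one]
    linear_combination (eval ![v] r₀ - eval ![v] r₁ * u + 2 * a * eval ![v] r₁) * hlin
      + eval ![v] r₁ ^ 2 * hcirc
  have hr₁ : r₁ = 0 := by
    refine eq_zero_of_infinite_eval_eq_zero (Set.Ioi_infinite (b + |R|)) fun v hv ↦ ?_
    have hv' : 0 < (v - b) ^ 2 - R ^ 2 := by
      rw [Set.mem_Ioi] at hv
      nlinarith [abs_nonneg R, sq_abs R]
    have hDv := congrArg (eval ![v]) hD
    simp only [map_add, map_mul, map_pow, map_sub, eval_C, eval_X, Matrix.cons_val_fin_one,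
      map_zero] at hDv
    have hsq : eval ![v] r₁ ^ 2 = 0 := by
      nlinarith [sq_nonneg (eval ![v] r₀ + a * eval ![v] r₁), sq_nonneg (eval ![v] r₁)]
    exact pow_eq_zero_iff two_ne_zero |>.mp hsq
  refine ⟨hr₁, eq_zero_of_infinite_eval_eq_zero hS ?_⟩
  rintro v ⟨u, -, hlin⟩
  simpa [hr₁] using hlin

theorem gHole_dvd_of_infinite_zeros (q : MvPolynomial (Fin 2) ℝ)
    (hS : {v | ∃ u, (u - a) ^ 2 + (v - b) ^ 2 = R ^ 2 ∧ eval ![u, v] q = 0}.Infinite) :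
    gHole a b R ∣ q := by
  set r := finSuccEquiv ℝ 1 q %ₘ finSuccEquiv ℝ 1 (gHole a b R)
  have hr : r = Polynomial.C (r.coeff 1) * Polynomial.X + Polynomial.C (r.coeff 0) := by
    refine Polynomial.eq_X_add_C_of_natDegree_le_one ?_
    have := Polynomial.natDegree_modByMonic_lt (finSuccEquiv ℝ 1 q)
      (monic_finSuccEquiv_gHole a b R)
      (fun h ↦ by simpa [h] using natDegree_finSuccEquiv_gHole a b R)
    rw [natDegree_finSuccEquiv_gHole] at this
    exact Nat.lt_succ_iff.mp this
  have hlin : ∀ u v, (u - a) ^ 2 + (v - b) ^ 2 = R ^ 2 →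
      eval ![v] (r.coeff 1) * u + eval ![v] (r.coeff 0) = eval ![u, v] q := by
    intro u v hcirc
    have := eval₂_finSuccEquiv_modByMonic_of_eval_eq_zero (n := 1) ![v] u q (gHole a b R)
      (by simp [hcirc])
    change r.eval₂ _ u = _ at this
    rw [hr] at this
    simpa using this
  obtain ⟨h₁, h₀⟩ := eq_zero_of_infinite_circle_zeros a b R (r.coeff 1) (r.coeff 0) <|
    hS.mono <| by
      rintro v ⟨u, hcirc, hq⟩
      exact ⟨u, hcirc, (hlin u v hcirc).trans hq⟩
  have hr0 : r = 0 := by rw [hr, h₁, h₀]; simp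
  simpa using map_dvd (finSuccEquiv ℝ 1).symm
    ((Polynomial.modByMonic_eq_zero_iff_dvd (monic_finSuccEquiv_gHole a b R)).mp hr0)

end Circle

open Topology in
theorem infinite_ordinates_of_circle_near {a b R u₀ v₀ ε : ℝ} (hR : 0 < R) (hε : 0 < ε)
    (h₀ : (u₀ - a) ^ 2 + (v₀ - b) ^ 2 = R ^ 2) :
    {v | ∃ u, (u - a) ^ 2 + (v - b) ^ 2 = R ^ 2 ∧ (u - u₀) ^ 2 + (v - v₀) ^ 2 < ε ^ 2}.Infinite := by
  -- near `(u₀, v₀)` the circle is the graph `u = a + s √(R² - (v - b)²)` for a sign `s`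
  obtain ⟨s, hs, hu₀⟩ : ∃ s : ℝ, s ^ 2 = 1 ∧ u₀ = a + s * √(R ^ 2 - (v₀ - b) ^ 2) := by
    have hw : √(R ^ 2 - (v₀ - b) ^ 2) = |u₀ - a| := by
      rw [← Real.sqrt_sq_eq_abs]; congr 1; linarith
    rcases le_total 0 (u₀ - a) with h | h
    · exact ⟨1, by norm_num, by rw [hw, abs_of_nonneg h]; ring⟩
    · exact ⟨-1, by norm_num, by rw [hw, abs_of_nonpos h]; ring⟩
  have hnear : ∀ᶠ v in 𝓝 v₀,
      (a + s * √(R ^ 2 - (v - b) ^ 2) - u₀) ^ 2 + (v - v₀) ^ 2 < ε ^ 2 := by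
    refine ContinuousAt.eventually_lt (by fun_prop) continuousAt_const ?_
    simpa [← hu₀] using pow_pos hε 2
  obtain ⟨δ, hδ, hball⟩ := Metric.eventually_nhds_iff.mp hnear
  have hv₀ : |v₀ - b| ≤ R := abs_le_of_sq_le_sq (by linarith [sq_nonneg (u₀ - a)]) hR.le
  rw [abs_le] at hv₀
  refine (Set.Ioo_infinite (a := max (v₀ - δ) (b - R)) (b := min (v₀ + δ) (b + R)) ?_).mono ?_
  · simp only [max_lt_iff, lt_min_iff]
    refine ⟨⟨?_, ?_⟩, ?_, ?_⟩ <;> linarith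
  · rintro v ⟨hlo, hhi⟩
    simp only [max_lt_iff, lt_min_iff] at hlo hhi
    have hw : √(R ^ 2 - (v - b) ^ 2) ^ 2 = R ^ 2 - (v - b) ^ 2 :=
      Real.sq_sqrt (by nlinarith)
    refine ⟨_, ?_, hball ?_⟩
    · linear_combination √(R ^ 2 - (v - b) ^ 2) ^ 2 * hs + hw
    · rw [Real.dist_eq, abs_lt]
      constructor <;> linarith

theorem stmt18 (a b R : ℝ) (hR : 0 < R) (q : MvPolynomial (Fin 2) ℝ)
    (x₀ : EuclideanSpace ℝ (Fin 2)) (hx₀ : eval (fun i => x₀ i) (gHole a b R) = 0)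
    (ε : ℝ) (hε : 0 < ε)
    (hvan : ∀ y : EuclideanSpace ℝ (Fin 2), dist y x₀ < ε →
      eval (fun i => y i) (gHole a b R) = 0 → eval (fun i => y i) q = 0) :
    gHole a b R ∣ q := by
  rw [eval_gHole, sub_eq_zero] at hx₀
  refine gHole_dvd_of_infinite_zeros a b R q <|
    (infinite_ordinates_of_circle_near hR hε hx₀).mono ?_
  rintro v ⟨u, hcirc, hnear⟩
  refine ⟨u, hcirc, hvan !₂[u, v] ?_ (by simp [hcirc])⟩
  rw [EuclideanSpace.dist_eq, Fin.sum_univ_two, Real.sqrt_lt' hε]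
  simpa [Real.dist_eq, sq_abs] using hnear
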